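/- Fix ε ∈ (0,1). Let (V_n) be a sequence of 2×2 symmetric positive semidefinite real matrices converging entrywise to a (symmetric positive semidefinite) matrix V. Then for every δ > 0 there exists N such that for all n ≥ N: Ψ⁻¹(V_n,ε) − δ(1,1) ⊆ Ψ⁻¹(V,ε) ⊆ Ψ⁻¹(V_n,ε) + δ(1,1), where for a set S ⊆ ℝ² and w ∈ ℝ², S ± w = {z ± w : z ∈ S}. -/

import Mathlib

open MeasureTheory ProbabilityTheory
open scoped Classical

noncomputable section

/-- The standard Gaussian measure on `ℝ²`. -/
def stdGaussian2 : Measure (Fin 2 → ℝ) :=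
  MeasureTheory.Measure.pi fun _ => gaussianReal 0 1

/-- `Ψ(z; V)`: probability that a centered Gaussian vector with covariance `V`
(the law of `V^{1/2} Z` for standard Gaussian `Z`) lies in `{u : u₁ ≤ z₁, u₂ ≤ z₂}`. -/
def Psi (V : Matrix (Fin 2) (Fin 2) ℝ) (z : ℝ × ℝ) : ℝ :=
  if hV : V.PosSemidef then
    ((stdGaussian2.map (fun u => (hV.1.eigenvectorUnitary.1 * Matrix.diagonal (Real.sqrt ∘ hV.1.eigenvalues) *
      (star hV.1.eigenvectorUnitary : Matrix (Fin 2) (Fin 2) ℝ)).mulVec u)) {w | w 0 ≤ z.1 ∧ w 1 ≤ z.2}).toReal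
  else 0

/-- `Ψ⁻¹(V, ε) = {z ∈ ℝ² : Ψ(-z₁, -z₂; V) ≥ 1 - ε}`. -/
def PsiInv (V : Matrix (Fin 2) (Fin 2) ℝ) (ε : ℝ) : Set (ℝ × ℝ) :=
  {z | 1 - ε ≤ Psi V (-z.1, -z.2)}

/-- The standard normal CDF `Φ`. -/
def Phi (x : ℝ) : ℝ := ((gaussianReal 0 1) (Set.Iic x)).toReal

/-- The inverse `Φ⁻¹` of the standard normal CDF. -/
def PhiInv (ε : ℝ) : ℝ := sSup {x | Phi x ≤ ε}

end

/-!
Write `Ψ(z; V) = P(f_V Z ≤ z)` with `Z` standard Gaussian on `ℝ²` and `f_V u = V^{1/2} u`.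

The limit `V` has a uniform gap: for `t = 1 - ε` and `γ > 0` there is `c > 0` such that
`Ψ(w; V) ≥ t - c` forces `Ψ(w + γ𝟏; V) ≥ t + c`. Locally in `w` this is connectedness of `ℝ²`:
the open set `{f_V < w + γ𝟏}` cannot coincide with the closed set `{f_V ≤ w}` unless both are
empty or everything, and the Gaussian charges the nonempty open difference. Compactness makes
the gain uniform on bounded sets of `w`; when a coordinate of `w` is large, `Ψ` is close to a
one-dimensional marginal, which has a gap by the same argument.

On the other hand `V_n^{1/2} → V^{1/2}`, so on a compact set carrying all but `c` of the Gaussian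
mass, `f_{V_n}` and `f_V` differ by less than `γ` in each coordinate, whence
`Ψ(w; V) ≤ Ψ(w + γ𝟏; V_n) + c` and symmetrically. With `γ = δ/2` the gap absorbs both errors.
-/

open MeasureTheory ProbabilityTheory Filter Topology Set

section Distribution

variable {Ω : Type*} [MeasurableSpace Ω] {μ : Measure Ω}

lemma monotone_measureReal_preimage_Iic [IsFiniteMeasure μ] {E : Type*} [Preorder E]
    (g : Ω → E) : Monotone fun x => μ.real (g ⁻¹' Iic x) :=
  fun _ _ hxy => measureReal_mono (preimage_mono (Iic_subset_Iic.2 hxy))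

lemma lt_of_measureReal_preimage_Iic_lt [IsFiniteMeasure μ] {E : Type*} [LinearOrder E]
    {g : Ω → E} {a b : E} (h : μ.real (g ⁻¹' Iic a) < μ.real (g ⁻¹' Iic b)) : a < b :=
  (monotone_measureReal_preimage_Iic g).reflect_lt h

lemma measureReal_preimage_Iic_le_fst [IsFiniteMeasure μ] (f : Ω → ℝ × ℝ) (w : ℝ × ℝ) :
    μ.real (f ⁻¹' Iic w) ≤ μ.real ((Prod.fst ∘ f) ⁻¹' Iic w.1) :=
  measureReal_mono fun _ hu => hu.1

lemma measureReal_preimage_Iic_le_snd [IsFiniteMeasure μ] (f : Ω → ℝ × ℝ) (w : ℝ × ℝ) :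
    μ.real (f ⁻¹' Iic w) ≤ μ.real ((Prod.snd ∘ f) ⁻¹' Iic w.2) :=
  measureReal_mono fun _ hu => hu.2

lemma fst_add_snd_sub_one_le_measureReal_preimage_Iic [IsProbabilityMeasure μ] {f : Ω → ℝ × ℝ}
    (hf : Measurable f) (w : ℝ × ℝ) :
    μ.real ((Prod.fst ∘ f) ⁻¹' Iic w.1) + μ.real ((Prod.snd ∘ f) ⁻¹' Iic w.2) - 1
      ≤ μ.real (f ⁻¹' Iic w) := by
  change _ ≤ μ.real ((Prod.fst ∘ f) ⁻¹' Iic w.1 ∩ (Prod.snd ∘ f) ⁻¹' Iic w.2)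
  have hunion := measureReal_union_add_inter (μ := μ) (s := (Prod.fst ∘ f) ⁻¹' Iic w.1)
    (t := (Prod.snd ∘ f) ⁻¹' Iic w.2) ((measurable_snd.comp hf) measurableSet_Iic)
  linarith [measureReal_le_one (μ := μ)
    (s := (Prod.fst ∘ f) ⁻¹' Iic w.1 ∪ (Prod.snd ∘ f) ⁻¹' Iic w.2)]

lemma measureReal_preimage_Iic_eq_cdf [IsProbabilityMeasure μ] {g : Ω → ℝ} (hg : Measurable g)
    (x : ℝ) : μ.real (g ⁻¹' Iic x) = cdf (μ.map g) x := by
  have := Measure.isProbabilityMeasure_map (μ := μ) hg.aemeasurable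
  rw [cdf_eq_real, map_measureReal_apply hg measurableSet_Iic]

lemma exists_measureReal_preimage_Iic_lt [IsProbabilityMeasure μ] {g : Ω → ℝ} (hg : Measurable g)
    {s : ℝ} (hs : 0 < s) : ∃ q, μ.real (g ⁻¹' Iic q) < s := by
  simp_rw [measureReal_preimage_Iic_eq_cdf hg]
  exact ((tendsto_cdf_atBot _).eventually_lt_const hs).exists

lemma exists_lt_measureReal_preimage_Iic [IsProbabilityMeasure μ] {g : Ω → ℝ} (hg : Measurable g)
    {s : ℝ} (hs : s < 1) : ∃ M, s < μ.real (g ⁻¹' Iic M) := by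
  simp_rw [measureReal_preimage_Iic_eq_cdf hg]
  exact ((tendsto_cdf_atTop _).eventually_const_lt hs).exists

lemma measureReal_preimage_Iic_le_add_compl {E : Type*} [Preorder E] [Add E] [AddRightMono E]
    [IsFiniteMeasure μ] {f g : Ω → E} {K : Set Ω} {d : E} (h : ∀ u ∈ K, g u ≤ f u + d) (w : E) :
    μ.real (f ⁻¹' Iic w) ≤ μ.real (g ⁻¹' Iic (w + d)) + μ.real Kᶜ := by
  refine (measureReal_mono fun u (hu : f u ≤ w) => ?_).trans (measureReal_union_le _ _)
  by_cases huK : u ∈ K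
  · exact Or.inl ((h u huK).trans (add_le_add_left hu d))
  · exact Or.inr huK

lemma exists_isCompact_measureReal_compl_le [TopologicalSpace Ω]
    [TopologicalSpace.IsCompletelyPseudoMetrizableSpace Ω] [SecondCountableTopology Ω]
    [BorelSpace Ω] (μ : Measure Ω) [IsFiniteMeasure μ] {η : ℝ} (hη : 0 < η) :
    ∃ K, IsCompact K ∧ μ.real Kᶜ ≤ η := by
  obtain ⟨K, hK, hKc⟩ := isTightMeasureSet_iff_exists_isCompact_measure_compl_le.1
    (isTightMeasureSet_singleton (μ := μ)) (ENNReal.ofReal η) (ENNReal.ofReal_pos.2 hη)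
  exact ⟨K, hK, ENNReal.toReal_le_of_le_ofReal hη.le (hKc μ rfl)⟩

end Distribution

section Raise

variable {E F : Type*} [Preorder E] [TopologicalSpace E] [Preorder F] [TopologicalSpace F]

def StrictlyRaisesIic (σ : E → E) : Prop :=
  ∀ v, ∃ S W : Set E, IsClosed S ∧ IsOpen W ∧ S ⊆ W ∧ ∀ᶠ w in 𝓝 v, Iic w ⊆ S ∧ W ⊆ Iic (σ w)

lemma strictlyRaisesIic_add_const {γ : ℝ} (hγ : 0 < γ) : StrictlyRaisesIic (· + γ) := by
  intro v
  refine ⟨Iic (v + γ / 4), Iio (v + 3 * γ / 4), isClosed_Iic, isOpen_Iio,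
    Iic_subset_Iio.2 (by linarith), ?_⟩
  filter_upwards [Ioo_mem_nhds (show v - γ / 4 < v by linarith) (show v < v + γ / 4 by linarith)]
    with w hw
  exact ⟨Iic_subset_Iic.2 hw.2.le,
    Iio_subset_Iic_self.trans (Iic_subset_Iic.2 (by linarith [hw.1]))⟩

lemma StrictlyRaisesIic.prodMap {σ : E → E} {τ : F → F} (hσ : StrictlyRaisesIic σ)
    (hτ : StrictlyRaisesIic τ) : StrictlyRaisesIic (Prod.map σ τ) := by
  rintro ⟨v₁, v₂⟩
  obtain ⟨S₁, W₁, hS₁, hW₁, hSW₁, h₁⟩ := hσ v₁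
  obtain ⟨S₂, W₂, hS₂, hW₂, hSW₂, h₂⟩ := hτ v₂
  refine ⟨S₁ ×ˢ S₂, W₁ ×ˢ W₂, hS₁.prod hS₂, hW₁.prod hW₂, prod_mono hSW₁ hSW₂, ?_⟩
  rw [nhds_prod_eq]
  filter_upwards [h₁.prod_mk h₂] with ⟨w₁, w₂⟩ ⟨⟨hw₁S, hw₁W⟩, hw₂S, hw₂W⟩
  rw [Prod.map_apply, ← Iic_prod_Iic, ← Iic_prod_Iic]
  exact ⟨prod_mono hw₁S hw₂S, prod_mono hw₁W hw₂W⟩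

end Raise

section Gap

variable {Ω E : Type*} [TopologicalSpace Ω] [MeasurableSpace Ω] {μ : Measure Ω}
  [PreconnectedSpace Ω] [μ.IsOpenPosMeasure]

lemma measure_diff_pos_of_isClosed_subset_isOpen {S W : Set Ω} (hS : IsClosed S) (hW : IsOpen W)
    (hSW : S ⊆ W) (hSne : S.Nonempty) (hW_ne : W ≠ univ) : 0 < μ (W \ S) := by
  refine (hW.sdiff hS).measure_pos μ (nonempty_iff_ne_empty.2 fun hempty => ?_)
  have hSW_eq : S = W := hSW.antisymm (sdiff_eq_empty.1 hempty)
  rcases isClopen_iff.1 ⟨hS, hSW_eq ▸ hW⟩ with h | h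
  · exact hSne.ne_empty h
  · exact hW_ne (hSW_eq ▸ h)

variable [OpensMeasurableSpace Ω] [IsProbabilityMeasure μ]

lemma eventually_gain_nhds [Preorder E] [TopologicalSpace E] {f : Ω → E} (hf : Continuous f)
    {σ : E → E} (hσ : StrictlyRaisesIic σ) (v : E) :
    ∀ᶠ p : ℝ × E in 𝓝 (0, v), 0 < μ.real (f ⁻¹' Iic p.2) → μ.real (f ⁻¹' Iic (σ p.2)) < 1 →
      μ.real (f ⁻¹' Iic p.2) + p.1 ≤ μ.real (f ⁻¹' Iic (σ p.2)) := by
  obtain ⟨S, W, hS, hW, hSW, hv⟩ := hσ v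
  have hgain : ∀ w, Iic w ⊆ S ∧ W ⊆ Iic (σ w) →
      μ.real (f ⁻¹' Iic w) + μ.real (f ⁻¹' W \ f ⁻¹' S) ≤ μ.real (f ⁻¹' Iic (σ w)) := by
    rintro w ⟨hwS, hwW⟩
    rw [measureReal_sdiff (preimage_mono hSW) (hS.preimage hf).measurableSet]
    linarith [measureReal_mono (μ := μ) (preimage_mono hwS),
      measureReal_mono (μ := μ) (preimage_mono hwW)]
  rw [nhds_prod_eq]
  by_cases hpos : 0 < μ.real (f ⁻¹' W \ f ⁻¹' S)
  · filter_upwards [(eventually_lt_nhds hpos).prod_mk hv] with p ⟨hp, hpw⟩ _ _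
    linarith [hgain p.2 hpw]
  -- A null gap contradicts connectedness as soon as some nearby `w` satisfies the hypotheses.
  · filter_upwards [hv.prod_inr _] with p ⟨hpS, hpW⟩ hlow hhigh
    refine absurd (ENNReal.toReal_pos (measure_diff_pos_of_isClosed_subset_isOpen
      (hS.preimage hf) (hW.preimage hf) (preimage_mono hSW) ?_ ?_).ne' (measure_ne_top _ _)) hpos
    · exact (nonempty_of_measureReal_ne_zero hlow.ne').mono (preimage_mono hpS)
    · intro huniv
      have := measureReal_mono (μ := μ) (preimage_mono hpW)
      rw [huniv, probReal_univ] at this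
      linarith

lemma exists_pos_gain_on_isCompact [Preorder E] [TopologicalSpace E] {f : Ω → E}
    (hf : Continuous f) {σ : E → E} (hσ : StrictlyRaisesIic σ) {K : Set E} (hK : IsCompact K) :
    ∃ m > 0, ∀ w ∈ K, 0 < μ.real (f ⁻¹' Iic w) → μ.real (f ⁻¹' Iic (σ w)) < 1 →
      μ.real (f ⁻¹' Iic w) + m ≤ μ.real (f ⁻¹' Iic (σ w)) := by
  have hK' := hK.eventually_forall_of_forall_eventually (P := fun c w =>
      0 < μ.real (f ⁻¹' Iic w) → μ.real (f ⁻¹' Iic (σ w)) < 1 →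
      μ.real (f ⁻¹' Iic w) + c ≤ μ.real (f ⁻¹' Iic (σ w)))
    fun v _ => eventually_gain_nhds hf hσ v
  obtain ⟨m, hm, hmK⟩ :=
    ((hK'.filter_mono nhdsWithin_le_nhds).and self_mem_nhdsWithin).exists (f := 𝓝[>] (0 : ℝ))
  exact ⟨m, hmK, hm⟩

variable {t γ : ℝ}

lemma exists_gap_real {g : Ω → ℝ} (hg : Continuous g) (ht : t ∈ Ioo 0 1) (hγ : 0 < γ) :
    ∃ c > 0, ∀ x, t - c ≤ μ.real (g ⁻¹' Iic x) → t + c ≤ μ.real (g ⁻¹' Iic (x + γ)) := by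
  have hmono := monotone_measureReal_preimage_Iic (μ := μ) g
  obtain ⟨q, hq⟩ := exists_measureReal_preimage_Iic_lt (μ := μ) hg.measurable (half_pos ht.1)
  obtain ⟨M, hM⟩ := exists_lt_measureReal_preimage_Iic (μ := μ) hg.measurable
    (show (1 + t) / 2 < 1 by linarith [ht.2])
  obtain ⟨m, hm, hgain⟩ :=
    exists_pos_gain_on_isCompact (μ := μ) hg (strictlyRaisesIic_add_const hγ)
      (isCompact_Icc (a := q) (b := M))
  set c := min (min (t / 2) ((1 - t) / 2)) (m / 2)
  have hc : 0 < c := lt_min (lt_min (by linarith [ht.1]) (by linarith [ht.2])) (half_pos hm)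
  refine ⟨c, hc, fun x hx => le_of_not_gt fun hlt => ?_⟩
  have hc₁ : c ≤ t / 2 := (min_le_left _ _).trans (min_le_left _ _)
  have hc₂ : c ≤ (1 - t) / 2 := (min_le_left _ _).trans (min_le_right _ _)
  have hc₃ : c ≤ m / 2 := min_le_right _ _
  have hqx : q ≤ x := (hmono.reflect_lt (by linarith)).le
  have hxM : x ≤ M := by linarith [hmono.reflect_lt (a := x + γ) (b := M) (by linarith)]
  linarith [hgain x ⟨hqx, hxM⟩ (by linarith) (by linarith)]

lemma exists_gap_prod {f : Ω → ℝ × ℝ} (hf : Continuous f) (ht : t ∈ Ioo 0 1) (hγ : 0 < γ) :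
    ∃ c > 0, ∀ w, t - c ≤ μ.real (f ⁻¹' Iic w) → t + c ≤ μ.real (f ⁻¹' Iic (w + (γ, γ))) := by
  have hf₁ : Continuous (Prod.fst ∘ f) := continuous_fst.comp hf
  have hf₂ : Continuous (Prod.snd ∘ f) := continuous_snd.comp hf
  obtain ⟨c₁, hc₁, hgap₁⟩ := exists_gap_real (μ := μ) hf₁ ht hγ
  obtain ⟨c₂, hc₂, hgap₂⟩ := exists_gap_real (μ := μ) hf₂ ht hγ
  obtain ⟨η, hη, hη₁, hη₂⟩ : ∃ η > 0, η ≤ c₁ / 2 ∧ η ≤ c₂ / 2 :=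
    ⟨min c₁ c₂ / 2, half_pos (lt_min hc₁ hc₂), by linarith [min_le_left c₁ c₂],
      by linarith [min_le_right c₁ c₂]⟩
  obtain ⟨q₁, hq₁⟩ := exists_measureReal_preimage_Iic_lt (μ := μ) hf₁.measurable (half_pos ht.1)
  obtain ⟨q₂, hq₂⟩ := exists_measureReal_preimage_Iic_lt (μ := μ) hf₂.measurable (half_pos ht.1)
  obtain ⟨M₁, hM₁⟩ := exists_lt_measureReal_preimage_Iic (μ := μ) hf₁.measurable
    (show 1 - η < 1 by linarith)
  obtain ⟨M₂, hM₂⟩ := exists_lt_measureReal_preimage_Iic (μ := μ) hf₂.measurable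
    (show 1 - η < 1 by linarith)
  have hraise : StrictlyRaisesIic (· + (γ, γ) : ℝ × ℝ → ℝ × ℝ) :=
    (strictlyRaisesIic_add_const hγ).prodMap (strictlyRaisesIic_add_const hγ)
  obtain ⟨m, hm, hgain⟩ := exists_pos_gain_on_isCompact (μ := μ) hf hraise
    (isCompact_Icc (a := (q₁, q₂)) (b := (M₁, M₂)))
  set c := min (min (t / 2) ((1 - t) / 2)) (min η (m / 2))
  have hc : 0 < c := lt_min (lt_min (by linarith [ht.1]) (by linarith [ht.2]))
    (lt_min hη (half_pos hm))
  have hct : c ≤ t / 2 := (min_le_left _ _).trans (min_le_left _ _)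
  have hc1t : c ≤ (1 - t) / 2 := (min_le_left _ _).trans (min_le_right _ _)
  have hcη : c ≤ η := (min_le_right _ _).trans (min_le_left _ _)
  have hcm : c ≤ m / 2 := (min_le_right _ _).trans (min_le_right _ _)
  refine ⟨c, hc, fun w hw => le_of_not_gt fun hlt => ?_⟩
  have hle₁ := measureReal_preimage_Iic_le_fst (μ := μ) f w
  have hle₂ := measureReal_preimage_Iic_le_snd (μ := μ) f w
  have hge := fst_add_snd_sub_one_le_measureReal_preimage_Iic (μ := μ) hf.measurable (w + (γ, γ))
  simp only [Prod.fst_add, Prod.snd_add] at hge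
  have hq₁w : q₁ < w.1 :=
    lt_of_measureReal_preimage_Iic_lt (μ := μ) (g := Prod.fst ∘ f) (by linarith)
  have hq₂w : q₂ < w.2 :=
    lt_of_measureReal_preimage_Iic_lt (μ := μ) (g := Prod.snd ∘ f) (by linarith)
  rcases le_or_gt w.1 M₁ with hwM₁ | hwM₁
  · rcases le_or_gt w.2 M₂ with hwM₂ | hwM₂
    · linarith [hgain w ⟨⟨hq₁w.le, hq₂w.le⟩, hwM₁, hwM₂⟩ (by linarith) (by linarith)]
    · have h₂ : μ.real ((Prod.snd ∘ f) ⁻¹' Iic M₂) ≤ μ.real ((Prod.snd ∘ f) ⁻¹' Iic (w.2 + γ)) :=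
        monotone_measureReal_preimage_Iic _ (show M₂ ≤ w.2 + γ by linarith)
      linarith [hgap₁ w.1 (by linarith)]
  · have h₁ : μ.real ((Prod.fst ∘ f) ⁻¹' Iic M₁) ≤ μ.real ((Prod.fst ∘ f) ⁻¹' Iic (w.1 + γ)) :=
      monotone_measureReal_preimage_Iic _ (show M₁ ≤ w.1 + γ by linarith)
    linarith [hgap₂ w.2 (by linarith)]

end Gap

section Gaussian

open scoped Matrix

instance : IsProbabilityMeasure stdGaussian2 := by
  unfold stdGaussian2; infer_instance

instance : stdGaussian2.IsOpenPosMeasure := by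
  have : (gaussianReal 0 1).IsOpenPosMeasure :=
    (gaussianReal_absolutelyContinuous' 0 one_ne_zero).isOpenPosMeasure
  unfold stdGaussian2; infer_instance

def pairMulVec (A : Matrix (Fin 2) (Fin 2) ℝ) (u : Fin 2 → ℝ) : ℝ × ℝ :=
  ((A *ᵥ u) 0, (A *ᵥ u) 1)

lemma continuous_pairMulVec :
    Continuous fun p : Matrix (Fin 2) (Fin 2) ℝ × (Fin 2 → ℝ) => pairMulVec p.1 p.2 := by
  have h : Continuous fun p : Matrix (Fin 2) (Fin 2) ℝ × (Fin 2 → ℝ) => p.1 *ᵥ p.2 :=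
    continuous_fst.matrix_mulVec continuous_snd
  exact ((continuous_apply 0).comp h).prodMk ((continuous_apply 1).comp h)

lemma Prod.le_add_of_dist_lt {p q : ℝ × ℝ} {δ : ℝ} (h : dist p q < δ) : p ≤ q + (δ, δ) := by
  rw [Prod.dist_eq, max_lt_iff, Real.dist_eq, Real.dist_eq, abs_lt, abs_lt] at h
  exact ⟨by simp only [Prod.fst_add]; linarith [h.1.2],
    by simp only [Prod.snd_add]; linarith [h.2.2]⟩

lemma eventually_forall_pairMulVec_le {A : Matrix (Fin 2) (Fin 2) ℝ} {K : Set (Fin 2 → ℝ)}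
    (hK : IsCompact K) {δ : ℝ} (hδ : 0 < δ) :
    ∀ᶠ B in 𝓝 A, ∀ u ∈ K,
      pairMulVec B u ≤ pairMulVec A u + (δ, δ) ∧ pairMulVec A u ≤ pairMulVec B u + (δ, δ) := by
  have hdist : Continuous fun p : Matrix (Fin 2) (Fin 2) ℝ × (Fin 2 → ℝ) =>
      dist (pairMulVec p.1 p.2) (pairMulVec A p.2) :=
    continuous_pairMulVec.dist
      (continuous_pairMulVec.comp ((continuous_const (y := A)).prodMk continuous_snd))
  have hnear := hK.eventually_forall_of_forall_eventually (x₀ := A)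
    (P := fun B u => dist (pairMulVec B u) (pairMulVec A u) < δ) fun u _ =>
      hdist.continuousAt.eventually_lt continuousAt_const (by simpa using hδ)
  filter_upwards [hnear] with B hB u hu
  exact ⟨Prod.le_add_of_dist_lt (hB u hu),
    Prod.le_add_of_dist_lt (dist_comm (α := ℝ × ℝ) _ _ ▸ hB u hu)⟩

open scoped MatrixOrder

lemma Matrix.PosSemidef.cfcSqrt_eq {n : Type*} [Fintype n] [DecidableEq n] {V : Matrix n n ℝ}
    (hV : V.PosSemidef) :
    CFC.sqrt V = hV.1.eigenvectorUnitary.1 * Matrix.diagonal (Real.sqrt ∘ hV.1.eigenvalues) *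
      (star hV.1.eigenvectorUnitary : Matrix n n ℝ) := by
  rw [CFC.sqrt_eq_real_sqrt V hV.nonneg, cfcₙ_eq_cfc, hV.1.cfc_eq, Matrix.IsHermitian.cfc,
    Unitary.conjStarAlgAut_apply]
  simp

open scoped Matrix.Norms.L2Operator in
lemma tendsto_cfcSqrt {n ι : Type*} [Fintype n] [DecidableEq n] {l : Filter ι}
    {M : ι → Matrix n n ℝ} {A : Matrix n n ℝ} (hM : ∀ i, (M i).PosSemidef) (hA : A.PosSemidef)
    (h : Tendsto M l (𝓝 A)) : Tendsto (fun i => CFC.sqrt (M i)) l (𝓝 (CFC.sqrt A)) :=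
  (CFC.continuousOn_sqrt.continuousWithinAt hA.nonneg).tendsto.comp
    (tendsto_nhdsWithin_iff.2 ⟨h, Eventually.of_forall fun i => (hM i).nonneg⟩)

noncomputable def sqrtMulVec (V : Matrix (Fin 2) (Fin 2) ℝ) : (Fin 2 → ℝ) → ℝ × ℝ :=
  pairMulVec (CFC.sqrt V)

lemma continuous_sqrtMulVec (V : Matrix (Fin 2) (Fin 2) ℝ) : Continuous (sqrtMulVec V) :=
  continuous_pairMulVec.comp (continuous_const.prodMk continuous_id)

lemma Psi_eq_measureReal {V : Matrix (Fin 2) (Fin 2) ℝ} (hV : V.PosSemidef) (z : ℝ × ℝ) :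
    Psi V z = stdGaussian2.real (sqrtMulVec V ⁻¹' Iic z) := by
  rw [Psi, dif_pos hV, ← hV.cfcSqrt_eq, Measure.map_apply
    (continuous_const.matrix_mulVec continuous_id').measurable]
  · rfl
  · exact (measurableSet_le (measurable_pi_apply 0) measurable_const).inter
      (measurableSet_le (measurable_pi_apply 1) measurable_const)

lemma mem_PsiInv_iff {V : Matrix (Fin 2) (Fin 2) ℝ} (hV : V.PosSemidef) {ε : ℝ} {z : ℝ × ℝ} :
    z ∈ PsiInv V ε ↔ 1 - ε ≤ stdGaussian2.real (sqrtMulVec V ⁻¹' Iic (-z)) := by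
  change 1 - ε ≤ Psi V (-z.1, -z.2) ↔ _
  rw [Psi_eq_measureReal hV]
  rfl

lemma eventually_forall_sqrtMulVec_le {ι : Type*} {l : Filter ι}
    {Vn : ι → Matrix (Fin 2) (Fin 2) ℝ} {V : Matrix (Fin 2) (Fin 2) ℝ}
    (hVn : ∀ i, (Vn i).PosSemidef) (hV : V.PosSemidef) (h : Tendsto Vn l (𝓝 V))
    {K : Set (Fin 2 → ℝ)} (hK : IsCompact K) {δ : ℝ} (hδ : 0 < δ) :
    ∀ᶠ i in l, ∀ u ∈ K, sqrtMulVec (Vn i) u ≤ sqrtMulVec V u + (δ, δ) ∧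
      sqrtMulVec V u ≤ sqrtMulVec (Vn i) u + (δ, δ) :=
  (tendsto_cfcSqrt hVn hV h).eventually (eventually_forall_pairMulVec_le hK hδ)

end Gaussian

/-- **Continuity of `Ψ⁻¹(·, ε)`**: if positive semidefinite matrices `Vₙ` converge
entrywise to a positive semidefinite matrix `V`, then for every `δ > 0` and all
sufficiently large `n`, `Ψ⁻¹(Vₙ,ε) - δ𝟏 ⊆ Ψ⁻¹(V,ε) ⊆ Ψ⁻¹(Vₙ,ε) + δ𝟏`. -/
theorem psiInv_continuity
    (ε : ℝ) (hε : ε ∈ Set.Ioo (0 : ℝ) 1)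
    (Vn : ℕ → Matrix (Fin 2) (Fin 2) ℝ) (V : Matrix (Fin 2) (Fin 2) ℝ)
    (hVn : ∀ n, (Vn n).PosSemidef) (hV : V.PosSemidef)
    (hconv : ∀ i j, Filter.Tendsto (fun n => Vn n i j) Filter.atTop (nhds (V i j))) :
    ∀ δ > (0 : ℝ), ∃ N : ℕ, ∀ n ≥ N,
      ((fun z : ℝ × ℝ => z - (δ, δ)) '' PsiInv (Vn n) ε ⊆ PsiInv V ε) ∧
      (PsiInv V ε ⊆ (fun z : ℝ × ℝ => z + (δ, δ)) '' PsiInv (Vn n) ε) := by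
  intro δ hδ
  have ht : 1 - ε ∈ Ioo (0 : ℝ) 1 := ⟨by linarith [hε.2], by linarith [hε.1]⟩
  obtain ⟨c, hc, hgap⟩ :=
    exists_gap_prod (μ := stdGaussian2) (continuous_sqrtMulVec V) ht (half_pos hδ)
  obtain ⟨K, hK, htail⟩ := exists_isCompact_measureReal_compl_le stdGaussian2 hc
  have hlim : Tendsto Vn atTop (𝓝 V) := tendsto_pi_nhds.2 fun i => tendsto_pi_nhds.2 (hconv i)
  obtain ⟨N, hN⟩ :=
    eventually_atTop.1 (eventually_forall_sqrtMulVec_le hVn hV hlim hK (half_pos hδ))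
  have hshift : ∀ z : ℝ × ℝ, -(z - (δ, δ)) = -z + (δ / 2, δ / 2) + (δ / 2, δ / 2) := fun z =>
    Prod.ext (by simp; ring) (by simp; ring)
  refine ⟨N, fun n hn => ⟨?_, fun z hz => ⟨z - (δ, δ), ?_, sub_add_cancel z _⟩⟩⟩
  · rintro _ ⟨z, hz, rfl⟩
    rw [mem_PsiInv_iff (hVn n)] at hz
    rw [mem_PsiInv_iff hV, hshift]
    have hcouple := measureReal_preimage_Iic_le_add_compl (μ := stdGaussian2)
      (fun u hu => (hN n hn u hu).2) (-z)
    linarith [hgap (-z + (δ / 2, δ / 2)) (by linarith)]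
  · rw [mem_PsiInv_iff hV] at hz
    rw [mem_PsiInv_iff (hVn n), hshift]
    have hcouple := measureReal_preimage_Iic_le_add_compl (μ := stdGaussian2)
      (fun u hu => (hN n hn u hu).1) (-z + (δ / 2, δ / 2))
    linarith [hgap (-z) (by linarith)]
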